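/- In the discrete oscillator group L = H₁ʳ(ℤ) ⋊_S ℤδ, if the automorphism S̄ induced on H₁ʳ(ℤ)/Z(H₁ʳ(ℤ)) ≅ ℤ² is one of the matrices S_2 = -I₂, S_3, S_4, S_6 (of order q ∈ {2,3,4,6}) and S(γ) = γ, then S^q = id and the center of L is generated by γ and δ^q. -/

import Mathlib

/-- The discrete Heisenberg group `H₁ʳ(ℤ)`: elements `α^x β^y γ^z` in normal form,
with `[α,β] = γ^r` and `γ` central. -/
@[ext]
structure Heis (r : ℤ) where
  x : ℤ
  y : ℤ
  z : ℤ

namespace Heis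

variable {r : ℤ}

instance : Mul (Heis r) :=
  ⟨fun a b => ⟨a.x + b.x, a.y + b.y, a.z + b.z + r * a.x * b.y⟩⟩

instance : One (Heis r) := ⟨⟨0, 0, 0⟩⟩

instance : Inv (Heis r) := ⟨fun a => ⟨-a.x, -a.y, -a.z + r * a.x * a.y⟩⟩

@[simp] theorem mul_x (a b : Heis r) : (a * b).x = a.x + b.x := rfl
@[simp] theorem mul_y (a b : Heis r) : (a * b).y = a.y + b.y := rfl
@[simp] theorem mul_z (a b : Heis r) : (a * b).z = a.z + b.z + r * a.x * b.y := rfl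
@[simp] theorem one_x : (1 : Heis r).x = 0 := rfl
@[simp] theorem one_y : (1 : Heis r).y = 0 := rfl
@[simp] theorem one_z : (1 : Heis r).z = 0 := rfl
@[simp] theorem inv_x (a : Heis r) : (a⁻¹).x = -a.x := rfl
@[simp] theorem inv_y (a : Heis r) : (a⁻¹).y = -a.y := rfl
@[simp] theorem inv_z (a : Heis r) : (a⁻¹).z = -a.z + r * a.x * a.y := rfl

instance : Group (Heis r) where
  mul_assoc a b c := by ext <;> simp <;> ring
  one_mul a := by ext <;> simp
  mul_one a := by ext <;> simp
  inv_mul_cancel a := by ext <;> simp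

/-- The generator `α` of the discrete Heisenberg group. -/
def α : Heis r := ⟨1, 0, 0⟩
/-- The generator `β` of the discrete Heisenberg group. -/
def β : Heis r := ⟨0, 1, 0⟩
/-- The central generator `γ` of the discrete Heisenberg group. -/
def γ : Heis r := ⟨0, 0, 1⟩

end Heis


open SemidirectProduct

/-!
An automorphism `S` of `Heis r` with `S γ = γ` acts on `Heis r ⧸ ⟨γ⟩ ≅ ℤ²` through the
matrix `S̄`; for the four matrices in question `S̄ ^ q = 1` and `det (S̄ ^ j - 1) ≠ 0` for
`0 < j < q`.

An automorphism `T` acting trivially on `ℤ²` and fixing `γ` has the form `h ↦ h γ ^ c(h)` for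
a linear form `c`. If `T` commutes with `S`, then `c ∘ S̄ = c`, so `c = 0` since `S̄ - 1` is
nondegenerate. Taking `T = S ^ q` gives `S ^ q = 1`.

An element `(h, δ ^ n)` is central iff `S h = h` and `h * S ^ n m = m * h` for all `m`. The
first condition makes the image of `h` in `ℤ²` a fixed vector of `S̄`, so `h ∈ ⟨γ⟩` is central
in `Heis r`. The second then says `S ^ n α = α`, which forces `q ∣ n`.
-/

open scoped Matrix

theorem MulAut.zpow_apply_eq_self_of_apply_eq_self {G : Type*} [Group G] {e : MulAut G} {a : G}
    (h : e a = a) (n : ℤ) : (e ^ n) a = a := by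
  have := Equiv.Perm.zpow_apply_eq_self_of_apply_eq_self (f := MulAut.toPerm G e) h n
  rwa [← map_zpow] at this

theorem MonoidHom.apply_ofAdd_int {M : Type*} [Group M] (f : Multiplicative ℤ →* M) (n : ℤ) :
    f (Multiplicative.ofAdd n) = f (Multiplicative.ofAdd 1) ^ n := by
  rw [← map_zpow, ← ofAdd_zsmul, smul_eq_mul, mul_one]

namespace Matrix

variable {n R : Type*} [Fintype n] [DecidableEq n] [CommRing R] [NoZeroDivisors R]
  {A : Matrix n n R} {v : n → R}

theorem eq_zero_of_mulVec_eq_self (hA : (A - 1).det ≠ 0) (hv : A *ᵥ v = v) : v = 0 :=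
  eq_zero_of_mulVec_eq_zero hA (by rw [sub_mulVec, hv, one_mulVec, sub_self])

theorem eq_zero_of_vecMul_eq_self (hA : (A - 1).det ≠ 0) (hv : v ᵥ* A = v) : v = 0 :=
  eq_zero_of_vecMul_eq_zero hA (by rw [vecMul_sub, hv, vecMul_one, sub_self])

end Matrix

theorem SemidirectProduct.mem_center_iff {N G : Type*} [Group N] [Group G] {φ : G →* MulAut N}
    {x : N ⋊[φ] G} :
    x ∈ Subgroup.center (N ⋊[φ] G) ↔ x.right ∈ Subgroup.center G ∧
      (∀ g, φ g x.left = x.left) ∧ ∀ n, x.left * φ x.right n = n * x.left := by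
  simp only [Subgroup.mem_center_iff]
  constructor
  · intro hx
    refine ⟨fun g => congrArg right (hx (inr g)), fun g => ?_, fun n => ?_⟩
    · simpa using congrArg left (hx (inr g))
    · simpa using (congrArg left (hx (inl n))).symm
  · rintro ⟨hright, hfix, hcomm⟩ y
    ext
    · simp [hfix, hcomm]
    · exact hright y.right

namespace Heis

variable {r : ℤ}

theorem α_zpow (n : ℤ) : (α : Heis r) ^ n = ⟨n, 0, 0⟩ := by
  induction n using Int.induction_on with
  | zero => rfl
  | succ i ih => rw [zpow_add_one, ih]; ext <;> simp [α]
  | pred i ih => rw [zpow_sub_one, ih]; ext <;> simp [α, sub_eq_add_neg]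

theorem β_zpow (n : ℤ) : (β : Heis r) ^ n = ⟨0, n, 0⟩ := by
  induction n using Int.induction_on with
  | zero => rfl
  | succ i ih => rw [zpow_add_one, ih]; ext <;> simp [β]
  | pred i ih => rw [zpow_sub_one, ih]; ext <;> simp [β, sub_eq_add_neg]

theorem γ_zpow (n : ℤ) : (γ : Heis r) ^ n = ⟨0, 0, n⟩ := by
  induction n using Int.induction_on with
  | zero => rfl
  | succ i ih => rw [zpow_add_one, ih]; ext <;> simp [γ]
  | pred i ih => rw [zpow_sub_one, ih]; ext <;> simp [γ, sub_eq_add_neg]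

theorem zpow_x (a : Heis r) (n : ℤ) : (a ^ n).x = n * a.x := by
  induction n using Int.induction_on with
  | zero => simp
  | succ i ih => rw [zpow_add_one, mul_x, ih]; ring
  | pred i ih => rw [zpow_sub_one, mul_x, inv_x, ih]; ring

theorem zpow_y (a : Heis r) (n : ℤ) : (a ^ n).y = n * a.y := by
  induction n using Int.induction_on with
  | zero => simp
  | succ i ih => rw [zpow_add_one, mul_y, ih]; ring
  | pred i ih => rw [zpow_sub_one, mul_y, inv_y, ih]; ring

theorem γ_zpow_commute (n : ℤ) (a : Heis r) : Commute (γ ^ n) a := by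
  rw [γ_zpow]; ext <;> simp [add_comm]

theorem eq_α_zpow_mul_β_zpow_mul_γ_zpow (h : Heis r) :
    h = α ^ h.x * β ^ h.y * γ ^ (h.z - r * h.x * h.y) := by
  rw [α_zpow, β_zpow, γ_zpow]; ext <;> simp

theorem eq_γ_zpow_of_x_of_y (h : Heis r) (hx : h.x = 0) (hy : h.y = 0) : h = γ ^ h.z := by
  rw [γ_zpow]; ext <;> simp [hx, hy]

/-- The image of `h` in `Heis r ⧸ ⟨γ⟩ ≅ ℤ²`. -/
def coords (h : Heis r) : Fin 2 → ℤ := ![h.x, h.y]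

theorem coords_α : coords (α : Heis r) = ![1, 0] := rfl

theorem coords_apply (e : MulAut (Heis r)) (hγ : e γ = γ) (h : Heis r) :
    coords (e h) = !![(e α).x, (e β).x; (e α).y, (e β).y] *ᵥ coords h := by
  conv_lhs => rw [eq_α_zpow_mul_β_zpow_mul_γ_zpow h]
  simp only [map_mul, map_zpow, hγ]
  ext i; fin_cases i <;> simp [coords, zpow_x, zpow_y, γ, Matrix.mulVec, mul_comm]

theorem coords_pow_apply {e : MulAut (Heis r)} {A : Matrix (Fin 2) (Fin 2) ℤ}
    (hA : ∀ h, coords (e h) = A *ᵥ coords h) (j : ℕ) (h : Heis r) :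
    coords ((e ^ j) h) = (A ^ j) *ᵥ coords h := by
  induction j with
  | zero => simp
  | succ j ih => rw [pow_succ', MulAut.mul_apply, hA, ih, Matrix.mulVec_mulVec, pow_succ']

theorem apply_eq_mul_γ_zpow {T : MulAut (Heis r)} (hT : ∀ h, coords (T h) = coords h)
    (hγ : T γ = γ) (h : Heis r) : T h = h * γ ^ ((T α).z * h.x + (T β).z * h.y) := by
  have hα : T α = α * γ ^ (T α).z := by
    obtain ⟨hx, hy⟩ : (T α).x = 1 ∧ (T α).y = 0 := by simpa [coords, α] using hT α
    rw [γ_zpow]; ext <;> simp only [mul_x, mul_y, mul_z, hx, hy] <;> simp [α]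
  have hβ : T β = β * γ ^ (T β).z := by
    obtain ⟨hx, hy⟩ : (T β).x = 0 ∧ (T β).y = 1 := by simpa [coords, β] using hT β
    rw [γ_zpow]; ext <;> simp only [mul_x, mul_y, mul_z, hx, hy] <;> simp [β]
  conv_lhs => rw [eq_α_zpow_mul_β_zpow_mul_γ_zpow h]
  rw [map_mul, map_mul, map_zpow, map_zpow, map_zpow, hα, hβ, hγ,
    (γ_zpow_commute _ α).symm.mul_zpow, (γ_zpow_commute _ β).symm.mul_zpow, ← zpow_mul,
    ← zpow_mul]
  simp only [α_zpow, β_zpow, γ_zpow]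
  ext <;> simp only [α, β, mul_x, mul_y, mul_z] <;> ring

theorem eq_one_of_commute {T e : MulAut (Heis r)} {A : Matrix (Fin 2) (Fin 2) ℤ}
    (hT : ∀ h, coords (T h) = coords h) (hTγ : T γ = γ)
    (hA : ∀ h, coords (e h) = A *ᵥ coords h) (heγ : e γ = γ) (hdet : (A - 1).det ≠ 0)
    (hcomm : Commute T e) : T = 1 := by
  have key : ∀ h, (T α).z * (e h).x + (T β).z * (e h).y = (T α).z * h.x + (T β).z * h.y := by
    intro h
    have := congrArg (· h) hcomm.eq
    simp only [MulAut.mul_apply] at this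
    rw [apply_eq_mul_γ_zpow hT hTγ, apply_eq_mul_γ_zpow hT hTγ h, map_mul, map_zpow, heγ] at this
    simpa [γ_zpow] using congrArg Heis.z (mul_left_cancel this)
  have hA' : ∀ h, (e h).x = A 0 0 * h.x + A 0 1 * h.y ∧ (e h).y = A 1 0 * h.x + A 1 1 * h.y := by
    intro h
    simpa [coords, Matrix.mulVec, dotProduct] using hA h
  have hα : (T α).z * A 0 0 + (T β).z * A 1 0 = (T α).z := by simpa [hA', α] using key α
  have hβ : (T α).z * A 0 1 + (T β).z * A 1 1 = (T β).z := by simpa [hA', β] using key β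
  have hab : ![(T α).z, (T β).z] = 0 := by
    refine Matrix.eq_zero_of_vecMul_eq_self hdet ?_
    ext i; fin_cases i <;> simp [Matrix.vecMul, dotProduct, Fin.sum_univ_two, hα, hβ]
  ext1 h
  rw [apply_eq_mul_γ_zpow hT hTγ, show (T α).z = 0 from congrFun hab 0,
    show (T β).z = 0 from congrFun hab 1]
  simp

theorem pow_eq_one_of_pow_eq_one {e : MulAut (Heis r)} {A : Matrix (Fin 2) (Fin 2) ℤ} {q : ℕ}
    (hA : ∀ h, coords (e h) = A *ᵥ coords h) (hγ : e γ = γ) (hdet : (A - 1).det ≠ 0)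
    (hq : A ^ q = 1) : e ^ q = 1 :=
  eq_one_of_commute (fun h => by rw [coords_pow_apply hA, hq, Matrix.one_mulVec])
    (by simpa using MulAut.zpow_apply_eq_self_of_apply_eq_self hγ q) hA hγ hdet
    (Commute.pow_self e q)

theorem dvd_of_zpow_apply_α_eq_α {e : MulAut (Heis r)} {A : Matrix (Fin 2) (Fin 2) ℤ} {q : ℕ}
    (hA : ∀ h, coords (e h) = A *ᵥ coords h) (hq : e ^ q = 1) (hq0 : 0 < q)
    (hdet : ∀ j, 0 < j → j < q → (A ^ j - 1).det ≠ 0) {n : ℤ} (hn : (e ^ n) α = α) :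
    (q : ℤ) ∣ n := by
  set j := (n % q).toNat
  have hj : (e ^ j) α = α := by
    rwa [← zpow_natCast, Int.toNat_of_nonneg (Int.emod_nonneg _ (by omega)),
      ← zpow_eq_zpow_emod' n hq]
  by_contra hnd
  have hne : n % q ≠ 0 := fun h => hnd (Int.dvd_of_emod_eq_zero h)
  have hlt : n % q < q := Int.emod_lt_of_pos n (by omega)
  have := Matrix.eq_zero_of_mulVec_eq_self (hdet j (by omega) (by omega))
    (by rw [← coords_pow_apply hA, hj])
  simp [coords_α] at this

theorem center_semidirectProduct_le_closure {φ : Multiplicative ℤ →* MulAut (Heis r)}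
    {A : Matrix (Fin 2) (Fin 2) ℤ} {q : ℕ}
    (hA : ∀ h, coords (φ (.ofAdd 1) h) = A *ᵥ coords h) (hq : φ (.ofAdd 1) ^ q = 1)
    (hq1 : 1 < q) (hdet : ∀ j, 0 < j → j < q → (A ^ j - 1).det ≠ 0) :
    Subgroup.center (Heis r ⋊[φ] Multiplicative ℤ) ≤
      Subgroup.closure {inl γ, inr (.ofAdd 1) ^ q} := by
  intro x hx
  obtain ⟨-, hfix, hcomm⟩ := SemidirectProduct.mem_center_iff.1 hx
  obtain ⟨z, hz⟩ : ∃ z : ℤ, x.left = γ ^ z := by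
    have h0 := Matrix.eq_zero_of_mulVec_eq_self (by simpa using hdet 1 one_pos hq1)
      ((hA _).symm.trans (congrArg coords (hfix _)))
    exact ⟨_, eq_γ_zpow_of_x_of_y _ (congrFun h0 0) (congrFun h0 1)⟩
  have hα : φ x.right α = α := by
    have := hcomm α
    rw [hz, ← (γ_zpow_commute z α).eq] at this
    exact mul_left_cancel this
  obtain ⟨d, hd⟩ := dvd_of_zpow_apply_α_eq_α hA hq (by omega) hdet
    (n := x.right.toAdd) (by rwa [← MonoidHom.apply_ofAdd_int])
  have hright : x.right = (.ofAdd 1 ^ q) ^ d := by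
    rw [← zpow_natCast, ← zpow_mul, ← ofAdd_zsmul, smul_eq_mul, mul_one, ← hd, ofAdd_toAdd]
  rw [← inl_left_mul_inr_right x, hz, hright, map_zpow, map_zpow, map_pow]
  exact mul_mem (zpow_mem (Subgroup.subset_closure (by simp)) _)
    (zpow_mem (Subgroup.subset_closure (by simp)) _)

theorem closure_le_center_semidirectProduct {φ : Multiplicative ℤ →* MulAut (Heis r)} {q : ℕ}
    (hγ : φ (.ofAdd 1) γ = γ) (hq : φ (.ofAdd 1) ^ q = 1) :
    Subgroup.closure {inl γ, inr (.ofAdd 1) ^ q} ≤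
      Subgroup.center (Heis r ⋊[φ] Multiplicative ℤ) := by
  rw [Subgroup.closure_le]
  rintro _ (rfl | rfl) <;> rw [SetLike.mem_coe, SemidirectProduct.mem_center_iff]
  · refine ⟨one_mem _, fun g => ?_, fun n => ?_⟩
    · rw [← ofAdd_toAdd g, MonoidHom.apply_ofAdd_int]
      exact MulAut.zpow_apply_eq_self_of_apply_eq_self hγ _
    · simpa using (γ_zpow_commute 1 n).eq
  · rw [← map_pow (inr : Multiplicative ℤ →* _)]
    refine ⟨Subgroup.mem_center_iff.2 fun _ => mul_comm _ _, fun _ => map_one _, fun n => ?_⟩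
    rw [left_inr, right_inr, map_pow φ, hq]
    simp

end Heis

theorem oscillator_matrix_pow_eq_one_and_det_ne_zero {s11 s12 s21 s22 : ℤ} {q : ℕ}
    (hS : ((s11, s12, s21, s22) = (-1, 0, 0, -1) ∧ q = 2) ∨
          ((s11, s12, s21, s22) = (0, -1, 1, -1) ∧ q = 3) ∨
          ((s11, s12, s21, s22) = (0, -1, 1, 0) ∧ q = 4) ∨
          ((s11, s12, s21, s22) = (1, -1, 1, 0) ∧ q = 6)) :
    !![s11, s12; s21, s22] ^ q = 1 ∧ 1 < q ∧
      ∀ j, 0 < j → j < q → (!![s11, s12; s21, s22] ^ j - 1).det ≠ 0 := by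
  rcases hS with ⟨hs, rfl⟩ | ⟨hs, rfl⟩ | ⟨hs, rfl⟩ | ⟨hs, rfl⟩ <;>
  · obtain ⟨rfl, rfl, rfl, rfl⟩ := by simpa only [Prod.mk.injEq] using hs
    refine ⟨by decide, by norm_num, fun j hj0 hjq => ?_⟩
    interval_cases j <;> simp [pow_succ, Matrix.det_fin_two, Matrix.one_fin_two]

theorem center_of_discrete_oscillator_group_finite_order_general
    (r k l : ℤ)
    (s11 s12 s21 s22 : ℤ) (q : ℕ)
    (hS : ((s11, s12, s21, s22) = (-1, 0, 0, -1) ∧ q = 2) ∨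
          ((s11, s12, s21, s22) = (0, -1, 1, -1) ∧ q = 3) ∨
          ((s11, s12, s21, s22) = (0, -1, 1, 0) ∧ q = 4) ∨
          ((s11, s12, s21, s22) = (1, -1, 1, 0) ∧ q = 6))
    (φ : Multiplicative ℤ →* MulAut (Heis r))
    (hα : φ (Multiplicative.ofAdd 1) Heis.α = Heis.α ^ s11 * Heis.β ^ s21 * Heis.γ ^ k)
    (hβ : φ (Multiplicative.ofAdd 1) Heis.β = Heis.α ^ s12 * Heis.β ^ s22 * Heis.γ ^ l)
    (hγ : φ (Multiplicative.ofAdd 1) Heis.γ = Heis.γ) :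
    (φ (Multiplicative.ofAdd 1)) ^ q = 1 ∧
    Subgroup.center (Heis r ⋊[φ] Multiplicative ℤ) =
      Subgroup.closure {SemidirectProduct.inl Heis.γ,
        (SemidirectProduct.inr (Multiplicative.ofAdd 1)) ^ q} := by
  obtain ⟨hAq, hq1, hdet⟩ := oscillator_matrix_pow_eq_one_and_det_ne_zero hS
  have hA : ∀ h, Heis.coords (φ (.ofAdd 1) h) = !![s11, s12; s21, s22] *ᵥ Heis.coords h := by
    intro h
    rw [Heis.coords_apply _ hγ, hα, hβ]
    simp [Heis.zpow_x, Heis.zpow_y, Heis.α, Heis.β, Heis.γ]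
  have hq := Heis.pow_eq_one_of_pow_eq_one hA hγ (by simpa using hdet 1 one_pos hq1) hAq
  exact ⟨hq, le_antisymm (Heis.center_semidirectProduct_le_closure hA hq hq1 hdet)
    (Heis.closure_le_center_semidirectProduct hγ hq)⟩

/-- In a discrete oscillator group `L = H₁ʳ(ℤ) ⋊_S ℤδ` whose induced action on
`H₁ʳ(ℤ)/Z(H₁ʳ(ℤ)) ≅ ℤ²` is one of the matrices `S₂ = -I₂`, `S₃`, `S₄`, `S₆`
(of order `q ∈ {2,3,4,6}`), and with `S(γ) = γ`, one has `S^q = id` and the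
centre of `L` is generated by `γ` and `δ^q`. -/
theorem center_of_discrete_oscillator_group_finite_order
    (r k l : ℤ) (hr : 0 < r)
    (s11 s12 s21 s22 : ℤ) (q : ℕ)
    (hS : ((s11, s12, s21, s22) = (-1, 0, 0, -1) ∧ q = 2) ∨
          ((s11, s12, s21, s22) = (0, -1, 1, -1) ∧ q = 3) ∨
          ((s11, s12, s21, s22) = (0, -1, 1, 0) ∧ q = 4) ∨
          ((s11, s12, s21, s22) = (1, -1, 1, 0) ∧ q = 6))
    (φ : Multiplicative ℤ →* MulAut (Heis r))
    (hα : φ (Multiplicative.ofAdd 1) Heis.α = Heis.α ^ s11 * Heis.β ^ s21 * Heis.γ ^ k)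
    (hβ : φ (Multiplicative.ofAdd 1) Heis.β = Heis.α ^ s12 * Heis.β ^ s22 * Heis.γ ^ l)
    (hγ : φ (Multiplicative.ofAdd 1) Heis.γ = Heis.γ) :
    (φ (Multiplicative.ofAdd 1)) ^ q = 1 ∧
    Subgroup.center (Heis r ⋊[φ] Multiplicative ℤ) =
      Subgroup.closure {SemidirectProduct.inl Heis.γ,
        (SemidirectProduct.inr (Multiplicative.ofAdd 1)) ^ q} :=
  center_of_discrete_oscillator_group_finite_order_general r k l s11 s12 s21 s22 q hS φ hα hβ hγ
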